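/- arXiv:2206.03054 — 4 statements merged into one kernel-verified Lean document; each statement's English description precedes it below -/
import Mathlib

section
/- Let E be a finite-dimensional vector space, let d, d' be integers between 0 and dim E, and let V ⊆ E be a fixed subspace of dimension d. If the dimension of V ∩ W is the same for every subspace W ⊆ E of dimension d', then at least one of the following holds: d = 0, d = dim E, d' = 0, or d' = dim E. -/
/-!
Let `n = dim E`, `d = dim V`. Among the subspaces `W` of dimension `d'`, the intersection
`V ⊓ W` is as large as possible, of dimension `min d d'`, when `W` is nested with `V`, and as
small as possible, of dimension `max 0 (d + d' - n)`, when `W` is nested with a complement of `V`.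
If these two values agree, then `d` or `d'` is `0` or `n`.
-/

open Module

namespace Submodule

variable {K E : Type*} [DivisionRing K] [AddCommGroup E] [Module K E]

theorem exists_le_and_finrank_eq (V : Submodule K E) [FiniteDimensional K V] {k : ℕ}
    (hk : k ≤ finrank K V) : ∃ U ≤ V, finrank K U = k := by
  obtain ⟨f, hf⟩ := exists_linearIndependent_of_le_finrank hk
  refine ⟨(span K (Set.range f)).map V.subtype, map_subtype_le V _, ?_⟩
  rw [finrank_map_subtype_eq, finrank_span_eq_card hf, Fintype.card_fin]

theorem exists_ge_and_finrank_eq [FiniteDimensional K E] (V : Submodule K E) {k : ℕ}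
    (hVk : finrank K V ≤ k) (hk : k ≤ finrank K E) : ∃ W ≥ V, finrank K W = k := by
  obtain ⟨C, hC⟩ := V.exists_isCompl
  have hVC := finrank_add_eq_of_isCompl hC
  obtain ⟨U, hUC, hU⟩ := C.exists_le_and_finrank_eq (k := k - finrank K V) (by omega)
  have hVU : V ⊓ U = ⊥ := (hC.disjoint.mono_right hUC).eq_bot
  have := finrank_sup_add_finrank_inf_eq V U
  rw [hVU, finrank_bot] at this
  exact ⟨V ⊔ U, le_sup_left, by omega⟩

variable [FiniteDimensional K E]

theorem exists_finrank_eq_and_finrank_inf_eq_min (V : Submodule K E) {k : ℕ}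
    (hk : k ≤ finrank K E) : ∃ W : Submodule K E, finrank K W = k ∧
      finrank K ↥(V ⊓ W) = min (finrank K V) k := by
  rcases le_total k (finrank K V) with hkV | hVk
  · obtain ⟨W, hWV, hW⟩ := V.exists_le_and_finrank_eq hkV
    exact ⟨W, hW, by rw [inf_eq_right.mpr hWV, hW, min_eq_right hkV]⟩
  · obtain ⟨W, hVW, hW⟩ := V.exists_ge_and_finrank_eq hVk hk
    exact ⟨W, hW, by rw [inf_eq_left.mpr hVW, min_eq_left hVk]⟩

/-- The truncated subtraction gives `0` exactly when `finrank V + k ≤ finrank E`. -/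
theorem exists_finrank_eq_and_finrank_inf_eq_sub (V : Submodule K E) {k : ℕ}
    (hk : k ≤ finrank K E) : ∃ W : Submodule K E, finrank K W = k ∧
      finrank K ↥(V ⊓ W) = finrank K V + k - finrank K E := by
  obtain ⟨C, hC⟩ := V.exists_isCompl
  have hVC := finrank_add_eq_of_isCompl hC
  rcases le_total k (finrank K C) with hkC | hCk
  · obtain ⟨W, hWC, hW⟩ := C.exists_le_and_finrank_eq hkC
    have hVW : V ⊓ W = ⊥ := (hC.disjoint.mono_right hWC).eq_bot
    exact ⟨W, hW, by rw [hVW, finrank_bot]; omega⟩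
  · obtain ⟨W, hCW, hW⟩ := C.exists_ge_and_finrank_eq hCk hk
    have hVW : V ⊔ W = ⊤ := (hC.codisjoint.mono_right hCW).eq_top
    have := finrank_sup_add_finrank_inf_eq V W
    rw [hVW, finrank_top] at this
    exact ⟨W, hW, by omega⟩

end Submodule

/-- If `V ⊆ E` has dimension `d` and `dim (V ⊓ W)` is the same for every
subspace `W` of dimension `d'`, then `d = 0`, `d = dim E`, `d' = 0` or
`d' = dim E`. -/
theorem stmt_1 (E : Type*) [AddCommGroup E] [Module ℂ E] [FiniteDimensional ℂ E]
    (d d' : ℕ) (hd' : d' ≤ finrank ℂ E)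
    (V : Submodule ℂ E) (hV : finrank ℂ V = d)
    (hconst : ∃ c : ℕ, ∀ W : Submodule ℂ E, finrank ℂ W = d' →
      finrank ℂ ↥(V ⊓ W) = c) :
    d = 0 ∨ d = finrank ℂ E ∨ d' = 0 ∨ d' = finrank ℂ E := by
  obtain ⟨c, hc⟩ := hconst
  obtain ⟨W₁, hW₁, hmax⟩ := V.exists_finrank_eq_and_finrank_inf_eq_min hd'
  obtain ⟨W₂, hW₂, hmin⟩ := V.exists_finrank_eq_and_finrank_inf_eq_sub hd'
  have hdE : d ≤ finrank ℂ E := hV ▸ V.finrank_le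
  rw [hc W₁ hW₁, hV] at hmax
  rw [hc W₂ hW₂, hV] at hmin
  omega
end

section
/- Let q ≥ 1, let E₁, …, E_q and F be finite-dimensional vector spaces, let αᵢ : Eᵢ → F be linear maps, and let dᵢ be integers with 0 ≤ dᵢ ≤ dim Eᵢ. Let V ⊆ F be a fixed subspace. Then the set of dimensions of the subspaces (Σᵢ αᵢ(Uᵢ)) ∩ V, as each Uᵢ ranges over the dᵢ-dimensional subspaces of Eᵢ, is an interval of integers (i.e., if it contains a and b with a ≤ c ≤ b, then it contains c). -/
open Module

/-!
Write `f U = dim ((Σᵢ αᵢ(Uᵢ)) ∩ V)`. Two tuples of subspaces of the same dimensions can be joined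
by a chain of exchanges, each of which replaces one `Uᵢ = H ⊕ ⟨a⟩` by `H ⊕ ⟨b⟩`, with `b` taken
from the target tuple so that the overlap with the target grows. Along an exchange, `f` rises
by at most one: passing from `Uᵢ` down to the hyperplane `H` does not increase it, and adding
the single vector `b` back raises it by at most one. Walking from a tuple with `f ≤ m` towards one
with `f ≥ m`, the value of `f` therefore has to hit `m`.
-/

theorem exists_eq_of_le_of_descent {α : Type*} {s : Set α} (f μ : α → ℕ) {y : α} (hy : y ∈ s)
    (descent : ∀ x ∈ s, x ≠ y → ∃ x' ∈ s, μ x' < μ x ∧ f x' ≤ f x + 1)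
    {m : ℕ} (hm : m ≤ f y) : ∀ x ∈ s, f x ≤ m → ∃ z ∈ s, f z = m := by
  intro x
  induction x using (measure μ).wf.induction with
  | _ x ih =>
    intro hx hxm
    rcases hxm.eq_or_lt with hxm | hxm
    · exact ⟨x, hx, hxm⟩
    obtain rfl | hne := eq_or_ne x y
    · omega
    obtain ⟨x', hx', hμ, hf⟩ := descent x hx hne
    exact ih x' hμ hx' (by omega)

namespace Submodule

variable {K M : Type*} [Field K] [AddCommGroup M] [Module K M]

theorem finrank_span_singleton_le_one (x : M) : finrank K (K ∙ x) ≤ 1 :=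
  (finrank_span_le_card ({x} : Set M)).trans (by simp)

variable [FiniteDimensional K M]

theorem finrank_sup_inf_le (T W V : Submodule K M) :
    finrank K ↥((T ⊔ W) ⊓ V) ≤ finrank K ↥(T ⊓ V) + finrank K W := by
  have hmeet : (T ⊔ W) ⊓ V ⊓ T = T ⊓ V := by
    rw [inf_right_comm, inf_eq_right.mpr (le_sup_left : T ≤ T ⊔ W)]
  have hjoin : (T ⊔ W) ⊓ V ⊔ T ≤ T ⊔ W := sup_le inf_le_left le_sup_left
  have hmodular := finrank_sup_add_finrank_inf_eq ((T ⊔ W) ⊓ V) T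
  rw [hmeet] at hmodular
  have := finrank_mono hjoin
  have := finrank_add_le_finrank_add_finrank T W
  omega

theorem finrank_eq_add_one_of_covBy {H U : Submodule K M} (h : H ⋖ U) :
    finrank K U = finrank K H + 1 := by
  obtain ⟨v, hvU, hvH⟩ := SetLike.exists_of_lt h.lt
  have hU : H ⊔ K ∙ v = U := (h.eq_or_eq le_sup_left
    (sup_le h.le ((span_singleton_le_iff_mem v U).mpr hvU))).resolve_left
      fun hH => hvH (hH ▸ mem_sup_right (mem_span_singleton_self v))
  rw [← hU, finrank_sup_span_singleton hvH]

theorem exists_exchange_of_finrank_eq {U W : Submodule K M} (hne : U ≠ W)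
    (hdim : finrank K U = finrank K W) :
    ∃ H ≤ U, ∃ b ∈ W, finrank K ↥(H ⊔ K ∙ b) = finrank K U ∧ U ⊓ W < (H ⊔ K ∙ b) ⊓ W := by
  have hUW : ¬ U ≤ W := fun h => hne (eq_of_le_of_finrank_eq h hdim)
  have hWU : ¬ W ≤ U := fun h => hne (eq_of_le_of_finrank_eq h hdim.symm).symm
  obtain ⟨H, hH, hcov⟩ := exists_le_covBy_of_lt (inf_lt_left.mpr hUW)
  obtain ⟨b, hbW, hbU⟩ := SetLike.not_le_iff_exists.mp hWU
  have hbH : b ∉ H := fun h => hbU (hcov.le h)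
  refine ⟨H, hcov.le, b, hbW, ?_, ?_⟩
  · rw [finrank_sup_span_singleton hbH, finrank_eq_add_one_of_covBy hcov]
  · refine SetLike.lt_iff_le_and_exists.mpr
      ⟨le_inf (hH.trans le_sup_left) inf_le_right, b, ?_, fun h => hbU (mem_inf.mp h).1⟩
    exact ⟨mem_sup_right (mem_span_singleton_self b), hbW⟩

end Submodule

section Exchange

open Function Submodule

variable {ι K F : Type*} [Field K] {E : ι → Type*} [∀ i, AddCommGroup (E i)] [∀ i, Module K (E i)]
  [AddCommGroup F] [Module K F]

noncomputable def finrankSumMapInf (α : ∀ i, E i →ₗ[K] F) (V : Submodule K F)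
    (U : ∀ i, Submodule K (E i)) : ℕ :=
  finrank K ↥((⨆ i, (U i).map (α i)) ⊓ V)

noncomputable def exchangeDistance [Fintype ι] (W U : ∀ i, Submodule K (E i)) : ℕ :=
  ∑ i, (finrank K (W i) - finrank K ↥(U i ⊓ W i))

variable [DecidableEq ι] [FiniteDimensional K F]

theorem finrankSumMapInf_update_sup_span_le (α : ∀ i, E i →ₗ[K] F) (V : Submodule K F)
    (U : ∀ i, Submodule K (E i)) {i : ι} {H : Submodule K (E i)} (hH : H ≤ U i) (b : E i) :
    finrankSumMapInf α V (update U i (H ⊔ K ∙ b)) ≤ finrankSumMapInf α V U + 1 := by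
  set T := ⨆ j, (update U i H j).map (α j)
  have hsplit : ⨆ j, (update U i (H ⊔ K ∙ b) j).map (α j) ≤ T ⊔ K ∙ α i b := by
    refine iSup_le fun j => ?_
    rcases eq_or_ne j i with rfl | hj
    · rw [update_self, Submodule.map_sup, map_span, Set.image_singleton]
      exact sup_le_sup_right (le_iSup_of_le j (by rw [update_self])) _
    · exact le_sup_of_le_left (le_iSup_of_le j (by rw [update_of_ne hj, update_of_ne hj]))
  have hT : T ≤ ⨆ j, (U j).map (α j) :=
    iSup_mono fun j => map_mono (update_le_self_iff.mpr hH j)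
  calc finrankSumMapInf α V (update U i (H ⊔ K ∙ b))
      ≤ finrank K ↥((T ⊔ K ∙ α i b) ⊓ V) := finrank_mono (inf_le_inf_right V hsplit)
    _ ≤ finrank K ↥(T ⊓ V) + finrank K (K ∙ α i b) := finrank_sup_inf_le _ _ _
    _ ≤ finrankSumMapInf α V U + 1 :=
      add_le_add (finrank_mono (inf_le_inf_right V hT)) (finrank_span_singleton_le_one _)

variable [Fintype ι] [∀ i, FiniteDimensional K (E i)]

theorem exists_exchange_step (α : ∀ i, E i →ₗ[K] F) (V : Submodule K F)
    {U W : ∀ i, Submodule K (E i)} (hdim : ∀ i, finrank K (U i) = finrank K (W i)) (hne : U ≠ W) :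
    ∃ U' : ∀ i, Submodule K (E i), (∀ i, finrank K (U' i) = finrank K (U i)) ∧
      exchangeDistance W U' < exchangeDistance W U ∧
      finrankSumMapInf α V U' ≤ finrankSumMapInf α V U + 1 := by
  obtain ⟨i, hi⟩ := Function.ne_iff.mp hne
  obtain ⟨H, hH, b, -, hdimA, hlt⟩ := exists_exchange_of_finrank_eq hi (hdim i)
  refine ⟨update U i (H ⊔ K ∙ b), fun j => ?_, ?_,
    finrankSumMapInf_update_sup_span_le α V U hH b⟩
  · rcases eq_or_ne j i with rfl | hj
    · rw [update_self, hdimA]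
    · rw [update_of_ne hj]
  · have hgrow := finrank_lt_finrank_of_lt hlt
    have hle := finrank_mono (inf_le_right : (H ⊔ K ∙ b) ⊓ W i ≤ W i)
    refine Finset.sum_lt_sum (fun j _ => ?_) ⟨i, Finset.mem_univ i, ?_⟩
    · rcases eq_or_ne j i with rfl | hj
      · rw [update_self]; omega
      · rw [update_of_ne hj]
    · rw [update_self]; omega

end Exchange

theorem stmt_3_general (q : ℕ) (E : Fin q → Type*) (F : Type*)
    [∀ i, AddCommGroup (E i)] [∀ i, Module ℂ (E i)] [∀ i, FiniteDimensional ℂ (E i)]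
    [AddCommGroup F] [Module ℂ F] [FiniteDimensional ℂ F]
    (α : ∀ i, E i →ₗ[ℂ] F) (d : Fin q → ℕ)
    (V : Submodule ℂ F) :
    ∀ a b m : ℕ,
      a ∈ {m : ℕ | ∃ U : ∀ i, Submodule ℂ (E i), (∀ i, finrank ℂ (U i) = d i) ∧
            finrank ℂ ↥((⨆ i, (U i).map (α i)) ⊓ V) = m} →
      b ∈ {m : ℕ | ∃ U : ∀ i, Submodule ℂ (E i), (∀ i, finrank ℂ (U i) = d i) ∧
            finrank ℂ ↥((⨆ i, (U i).map (α i)) ⊓ V) = m} →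
      a ≤ m → m ≤ b →
      m ∈ {m : ℕ | ∃ U : ∀ i, Submodule ℂ (E i), (∀ i, finrank ℂ (U i) = d i) ∧
            finrank ℂ ↥((⨆ i, (U i).map (α i)) ⊓ V) = m} := by
  rintro a b m ⟨Ua, hUa, rfl⟩ ⟨Ub, hUb, rfl⟩ ham hmb
  refine exists_eq_of_le_of_descent (y := Ub)
    (s := {U : ∀ i, Submodule ℂ (E i) | ∀ i, finrank ℂ (U i) = d i})
    (finrankSumMapInf α V) (exchangeDistance Ub) hUb (fun U hU hne => ?_) hmb Ua hUa ham
  obtain ⟨U', hdim', hμ, hf⟩ := exists_exchange_step α V (fun i => (hU i).trans (hUb i).symm) hne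
  exact ⟨U', fun i => (hdim' i).trans (hU i), hμ, hf⟩

/-- Given linear maps `αᵢ : Eᵢ → F` and integers `dᵢ ≤ dim Eᵢ`, and a fixed
subspace `V ⊆ F`, the set of dimensions of `(Σᵢ αᵢ(Uᵢ)) ⊓ V`, as each `Uᵢ`
ranges over the `dᵢ`-dimensional subspaces of `Eᵢ`, is an integer interval. -/
theorem stmt_3 (q : ℕ) (hq : 1 ≤ q) (E : Fin q → Type*) (F : Type*)
    [∀ i, AddCommGroup (E i)] [∀ i, Module ℂ (E i)] [∀ i, FiniteDimensional ℂ (E i)]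
    [AddCommGroup F] [Module ℂ F] [FiniteDimensional ℂ F]
    (α : ∀ i, E i →ₗ[ℂ] F) (d : Fin q → ℕ) (hd : ∀ i, d i ≤ finrank ℂ (E i))
    (V : Submodule ℂ F) :
    ∀ a b m : ℕ,
      a ∈ {m : ℕ | ∃ U : ∀ i, Submodule ℂ (E i), (∀ i, finrank ℂ (U i) = d i) ∧
            finrank ℂ ↥((⨆ i, (U i).map (α i)) ⊓ V) = m} →
      b ∈ {m : ℕ | ∃ U : ∀ i, Submodule ℂ (E i), (∀ i, finrank ℂ (U i) = d i) ∧
            finrank ℂ ↥((⨆ i, (U i).map (α i)) ⊓ V) = m} →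
      a ≤ m → m ≤ b →
      m ∈ {m : ℕ | ∃ U : ∀ i, Submodule ℂ (E i), (∀ i, finrank ℂ (U i) = d i) ∧
            finrank ℂ ↥((⨆ i, (U i).map (α i)) ⊓ V) = m} :=
  stmt_3_general q E F α d V
end

section
/- Let αᵢ : Eᵢ → F (1 ≤ i ≤ q) be linear maps between finite-dimensional vector spaces and dᵢ integers with 0 ≤ dᵢ ≤ dim Eᵢ. Let S be the sum of the images of those αᵢ with dᵢ = dim Eᵢ. Then dim(Σᵢ αᵢ(Uᵢ)) is the same for all choices of subspaces Uᵢ ⊆ Eᵢ with dim Uᵢ = dᵢ if and only if: for each i, either (i) dᵢ = 0, or (ii) dᵢ > 0 and Im αᵢ ⊆ S, or (iii) 0 < dᵢ < dim Eᵢ, αᵢ is injective and Im αᵢ ⊄ S; and moreover S together with the images Im αᵢ for i in case (iii) are in direct sum. -/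
/-!
Write `S` for `sumFullImages α d` and `Tᵢ(U) = Σ_{l ≠ i} α_l(U_l)`. Suppose the dimension is
constantly `D`. For `0 < dᵢ < dim Eᵢ`, `V ↦ dim (Tᵢ(U) + αᵢ(V))` is then constant on
`dᵢ`-dimensional `V`. As `dim (T + f(V)) = dim T + dim V - dim (V ∩ f⁻¹ T)` and, for
`0 < dim V < dim E`, `dim (V ∩ C)` varies with `V` unless `C` is `0` or `E`, either
`Im αᵢ ⊆ Tᵢ(U)`, or `αᵢ` is injective and `Im αᵢ ∩ Tᵢ(U) = 0`.

Let `Im αᵢ ⊄ S`. A vector lying in `Tᵢ(U)` for every `U` lies in `S`, so the second alternative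
holds for some `U`. It persists when one coordinate `U_j` is changed: with `A = Σ_{l ≠ i,j}
α_l(U_l)`, a switch to the first alternative would give `Im αᵢ ⊆ Im α_j + A`, the alternatives at
`j` for a `dᵢ`-dimensional `X ⊆ Eᵢ` would then give `Im α_j ⊆ αᵢ(X) + A`, and modularity would
force `Im αᵢ = αᵢ(X)`, which is too small. Hence case (iii) holds, `Im αᵢ` meets every `Tᵢ(U)`
trivially, and choosing the `U_j` through given vectors of the images yields the independence.
Conversely, under the conditions `Σ αᵢ(Uᵢ) = S ⊕ ⨁_{(iii)} αᵢ(Uᵢ)`, of dimension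
`dim S + Σ_{(iii)} dᵢ`.
-/

open Module

section

variable {q : ℕ} {E : Fin q → Type} {F : Type}
  [∀ i, AddCommGroup (E i)] [∀ i, Module ℂ (E i)]
  [AddCommGroup F] [Module ℂ F]

/-- `S`: the sum of the images of those `αᵢ` with `dᵢ = dim Eᵢ`. -/
noncomputable def sumFullImages (α : ∀ i, E i →ₗ[ℂ] F) (d : Fin q → ℕ) : Submodule ℂ F :=
  ⨆ (i) (_ : d i = finrank ℂ (E i)), LinearMap.range (α i)

/-- Case (iii): `0 < dᵢ < dim Eᵢ`, `αᵢ` injective and `Im αᵢ ⊄ S`. -/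
def CaseIII (α : ∀ i, E i →ₗ[ℂ] F) (d : Fin q → ℕ) (i : Fin q) : Prop :=
  0 < d i ∧ d i < finrank ℂ (E i) ∧ Function.Injective (α i) ∧
    ¬ LinearMap.range (α i) ≤ sumFullImages α d

end

theorem le_of_le_sup_of_disjoint_sup {α : Type*} [Lattice α] [OrderBot α] [IsModularLattice α]
    {a b c : α} (h : a ≤ b ⊔ c) (hd : Disjoint b (a ⊔ c)) : a ≤ c :=
  calc a ≤ (c ⊔ b) ⊓ (a ⊔ c) := le_inf (sup_comm b c ▸ h) le_sup_left
    _ = c ⊔ b ⊓ (a ⊔ c) := sup_inf_assoc_of_le b le_sup_right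
    _ = c := by rw [hd.eq_bot, sup_bot_eq]

theorem Function.induction_on_update {ι : Type*} [Fintype ι] [DecidableEq ι] {β : ι → Type*}
    {s : ∀ i, Set (β i)} {P : (∀ i, β i) → Prop}
    (h : ∀ x : ∀ i, β i, (∀ i, x i ∈ s i) → ∀ j, ∀ b ∈ s j, P x → P (Function.update x j b))
    {x y : ∀ i, β i} (hx : ∀ i, x i ∈ s i) (hy : ∀ i, y i ∈ s i) (hPx : P x) : P y := by
  suffices ∀ t : Finset ι, ∀ x : ∀ i, β i, (∀ i, x i ∈ s i) → (∀ j ∉ t, x j = y j) → P x → P y from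
    this Finset.univ x hx (by simp) hPx
  intro t
  induction t using Finset.induction_on with
  | empty => exact fun x _ hxy hPx => funext (fun j => hxy j (Finset.notMem_empty j)) ▸ hPx
  | insert a t _ ih =>
    intro x hx hxy hPx
    refine ih (Function.update x a (y a)) (fun i => ?_) (fun j hj => ?_) (h x hx a (y a) (hy a) hPx)
    · rcases eq_or_ne i a with rfl | hia
      · simpa using hy i
      · simpa [hia] using hx i
    · rcases eq_or_ne j a with rfl | hja
      · simp
      · simpa [hja] using hxy j (by simp [hja, hj])

namespace Submodule

theorem iSupIndep_of_forall_ne_disjoint {R N ι : Type*} [Ring R] [AddCommGroup N]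
    [Module R N] {p : ι → Submodule R N} (i₀ : ι)
    (h : ∀ i ≠ i₀, Disjoint (p i) (⨆ j ≠ i, p j)) : iSupIndep p := by
  classical
  rw [iSupIndep_iff_finsetSum_eq_zero_imp_eq_zero]
  intro s v hv hsum
  have hne : ∀ i ∈ s, i ≠ i₀ → v i = 0 := by
    intro i hi hi₀
    refine disjoint_def.mp (h i hi₀) _ (hv i hi) ?_
    rw [eq_neg_of_add_eq_zero_left ((s.add_sum_erase v hi).trans hsum), neg_mem_iff]
    exact sum_mem fun j hj => mem_iSup_of_mem j <|
      mem_iSup_of_mem (Finset.ne_of_mem_erase hj) (hv j (Finset.mem_of_mem_erase hj))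
  intro i hi
  by_cases hi₀ : i = i₀
  · subst hi₀
    rw [← s.add_sum_erase v hi, Finset.sum_eq_zero fun j hj => hne j (Finset.mem_of_mem_erase hj)
      (Finset.ne_of_mem_erase hj), add_zero] at hsum
    exact hsum
  · exact hne i hi hi₀

variable {K V W : Type*} [Field K] [AddCommGroup V] [Module K V] [AddCommGroup W] [Module K W]

theorem exists_le_finrank_eq (p : Submodule K V) {k : ℕ} (hk : k ≤ finrank K p) :
    ∃ U ≤ p, finrank K U = k := by
  obtain ⟨s, hs, hli⟩ := exists_finset_linearIndependent_of_le_finrank hk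
  refine ⟨(span K (s : Set p)).map p.subtype, map_subtype_le p _, ?_⟩
  rw [finrank_map_subtype_eq, finrank_span_finset_eq_card hli, hs]

theorem finrank_span_singleton_le_one_s4 (v : V) : finrank K (K ∙ v) ≤ 1 :=
  (finrank_span_le_card ({v} : Set V)).trans (by simp)

theorem exists_finrank_eq {k : ℕ} (hk : k ≤ finrank K V) :
    ∃ U : Submodule K V, finrank K U = k := by
  obtain ⟨U, -, hU⟩ := (⊤ : Submodule K V).exists_le_finrank_eq (k := k) (by simpa using hk)
  exact ⟨U, hU⟩

variable [FiniteDimensional K V]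

theorem exists_ge_finrank_eq (p : Submodule K V) {k : ℕ} (h₁ : finrank K p ≤ k)
    (h₂ : k ≤ finrank K V) : ∃ U : Submodule K V, p ≤ U ∧ finrank K U = k := by
  obtain ⟨C, hC⟩ := p.exists_isCompl
  have hpC := finrank_add_eq_of_isCompl hC
  obtain ⟨X, hXC, hX⟩ := C.exists_le_finrank_eq (k := k - finrank K p) (by omega)
  refine ⟨p ⊔ X, le_sup_left, ?_⟩
  have := finrank_sup_add_finrank_inf_eq p X
  rw [(hC.disjoint.mono_right hXC).eq_bot, finrank_bot] at this
  omega

theorem exists_finrank_eq_notMem_sup (p : Submodule K V) {v : V} (hv : v ∉ p) {k : ℕ}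
    (hk : k < finrank K V) : ∃ U : Submodule K V, finrank K U = k ∧ v ∉ p ⊔ U := by
  obtain ⟨f, hfv, hpf⟩ := exists_dual_map_eq_bot_of_notMem hv inferInstance
  have hrange : finrank K (LinearMap.range f) ≤ 1 := (finrank_le _).trans (finrank_self K).le
  have := LinearMap.finrank_range_add_finrank_ker f
  obtain ⟨U, hU, hUk⟩ := (LinearMap.ker f).exists_le_finrank_eq (k := k) (by omega)
  refine ⟨U, hUk, fun h => hfv (sup_le ?_ hU h)⟩
  exact LinearMap.le_ker_iff_map.mpr hpf

theorem exists_finrank_eq_mem_map {f : V →ₗ[K] W} {y : W} (hy : y ∈ LinearMap.range f) {k : ℕ}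
    (hk₀ : 0 < k) (hk : k ≤ finrank K V) : ∃ U : Submodule K V, finrank K U = k ∧ y ∈ U.map f := by
  obtain ⟨v, rfl⟩ := hy
  obtain ⟨U, hvU, hU⟩ :=
    (K ∙ v).exists_ge_finrank_eq ((finrank_span_singleton_le_one_s4 v).trans hk₀) hk
  exact ⟨U, hU, mem_map_of_mem (hvU (mem_span_singleton_self v))⟩

theorem finrank_iSup_eq_sum {ι : Type*} [Fintype ι] {p : ι → Submodule K V} (hp : iSupIndep p) :
    finrank K ↥(⨆ i, p i) = ∑ i, finrank K (p i) := by
  classical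
  rw [iSup_eq_range_dfinsupp_lsum, LinearMap.finrank_range_of_inj hp.dfinsupp_lsum_injective]
  exact finrank_directSum K fun i => p i

theorem finrank_map_add_finrank_inf_ker (f : V →ₗ[K] W) (M : Submodule K V) :
    finrank K (M.map f) + finrank K ↥(M ⊓ LinearMap.ker f) = finrank K M := by
  rw [← LinearMap.range_domRestrict, ← map_comap_subtype, finrank_map_subtype_eq,
    ← LinearMap.ker_domRestrict, LinearMap.finrank_range_add_finrank_ker]

theorem finrank_sup_map_add_finrank_inf_comap (f : V →ₗ[K] W) (T : Submodule K W)
    (M : Submodule K V) [FiniteDimensional K T] :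
    finrank K ↥(T ⊔ M.map f) + finrank K ↥(M ⊓ T.comap f)
      = finrank K T + finrank K M := by
  have hsup := finrank_sup_add_finrank_inf_eq T (M.map f)
  have hM := finrank_map_add_finrank_inf_ker f M
  have hMT := finrank_map_add_finrank_inf_ker f (M ⊓ T.comap f)
  rw [inf_comm, map_inf_eq_map_inf_comap] at hsup
  rw [inf_assoc, inf_eq_right.mpr (LinearMap.ker_le_comap f)] at hMT
  omega

theorem eq_bot_or_eq_top_of_finrank_inf_eq (C : Submodule K V) {k c : ℕ} (hk₀ : 0 < k)
    (hk : k < finrank K V)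
    (h : ∀ U : Submodule K V, finrank K U = k → finrank K ↥(U ⊓ C) = c) : C = ⊥ ∨ C = ⊤ := by
  by_contra! hC
  rcases le_or_gt k (finrank K C) with hkC | hCk
  · obtain ⟨v, hv⟩ : ∃ v, v ∉ C := by simpa [eq_top_iff'] using hC.2
    obtain ⟨U₁, hU₁C, hU₁⟩ := C.exists_le_finrank_eq hkC
    obtain ⟨U₂, hvU₂, hU₂⟩ := (K ∙ v).exists_ge_finrank_eq
      ((finrank_span_singleton_le_one_s4 v).trans hk₀) hk.le
    have hlt : U₂ ⊓ C < U₂ :=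
      inf_lt_left.mpr fun h => hv (h (hvU₂ (mem_span_singleton_self v)))
    have h₁ := h U₁ hU₁
    have h₂ := h U₂ hU₂
    rw [inf_eq_left.mpr hU₁C, hU₁] at h₁
    have := finrank_lt_finrank_of_lt hlt
    omega
  · obtain ⟨w, hwC, hw⟩ := C.ne_bot_iff.mp hC.1
    obtain ⟨U₁, hCU₁, hU₁⟩ := C.exists_ge_finrank_eq hCk.le hk.le
    obtain ⟨U₂, hU₂, hwU₂⟩ := (⊥ : Submodule K V).exists_finrank_eq_notMem_sup
      ((mem_bot K).not.mpr hw) hk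
    have hlt : U₂ ⊓ C < C :=
      inf_lt_right.mpr fun h => hwU₂ (by simpa using h hwC)
    have h₁ := h U₁ hU₁
    have h₂ := h U₂ hU₂
    rw [inf_eq_right.mpr hCU₁] at h₁
    have := finrank_lt_finrank_of_lt hlt
    omega

theorem mem_of_forall_finrank_eq_mem_sup_map (f : V →ₗ[K] W) (A : Submodule K W) {x : W}
    {k : ℕ} (hk : k < finrank K V)
    (h : ∀ U : Submodule K V, finrank K U = k → x ∈ A ⊔ U.map f) : x ∈ A := by
  by_contra hxA
  obtain ⟨U₀, hU₀⟩ := exists_finrank_eq (K := K) hk.le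
  obtain ⟨a, ha, -, ⟨v, rfl⟩, rfl⟩ :=
    mem_sup.mp (sup_le_sup_left LinearMap.map_le_range A (h U₀ hU₀))
  have hv : v ∉ A.comap f := fun hv => hxA (A.add_mem ha hv)
  obtain ⟨U, hU, hvU⟩ := (A.comap f).exists_finrank_eq_notMem_sup hv hk
  obtain ⟨a', ha', -, ⟨u, hu, rfl⟩, hx⟩ := mem_sup.mp (h U hU)
  have hvu : v - u ∈ A.comap f := by
    have : f v - f u = a' - a := by
      rw [sub_eq_sub_iff_add_eq_add, hx, add_comm]
    simpa only [mem_comap, map_sub, this] using A.sub_mem ha' ha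
  exact hvU (sub_add_cancel v u ▸ add_mem_sup hvu hu)

end Submodule

namespace LinearMap

variable {K V W : Type*} [Field K] [AddCommGroup V] [Module K V] [AddCommGroup W] [Module K W]
  [FiniteDimensional K V]

theorem range_le_or_injective_and_disjoint (f : V →ₗ[K] W) (T : Submodule K W)
    [FiniteDimensional K T] {k D : ℕ} (hk₀ : 0 < k) (hk : k < finrank K V)
    (h : ∀ U : Submodule K V, finrank K U = k → finrank K ↥(T ⊔ U.map f) = D) :
    range f ≤ T ∨ (Function.Injective f ∧ Disjoint (range f) T) := by
  have hC : ∀ U : Submodule K V, finrank K U = k →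
      finrank K ↥(U ⊓ T.comap f) = k + finrank K T - D := by
    intro U hU
    have := Submodule.finrank_sup_map_add_finrank_inf_comap f T U
    rw [h U hU, hU] at this
    omega
  rcases (T.comap f).eq_bot_or_eq_top_of_finrank_inf_eq hk₀ hk hC with hbot | htop
  · right
    refine ⟨ker_eq_bot.mp (eq_bot_iff.mpr (hbot ▸ ker_le_comap f)), ?_⟩
    rw [disjoint_iff, range_eq_map, Submodule.map_inf_eq_map_inf_comap, hbot, inf_bot_eq,
      Submodule.map_bot]
  · left
    rwa [range_le_iff_comap]

end LinearMap

section ImageSum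

variable {ι K F : Type*} {E : ι → Type*} [Field K] [∀ i, AddCommGroup (E i)]
  [∀ i, Module K (E i)] [AddCommGroup F] [Module K F]

def imageSum (α : ∀ i, E i →ₗ[K] F) (U : ∀ i, Submodule K (E i)) (s : Finset ι) :
    Submodule K F :=
  ⨆ l ∈ s, (U l).map (α l)

variable (α : ∀ i, E i →ₗ[K] F) (U : ∀ i, Submodule K (E i))

theorem map_le_imageSum {s : Finset ι} {l : ι} (hl : l ∈ s) : (U l).map (α l) ≤ imageSum α U s :=
  le_iSup₂_of_le l hl le_rfl

theorem imageSum_univ [Fintype ι] : imageSum α U Finset.univ = ⨆ i, (U i).map (α i) := by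
  simp [imageSum]

theorem imageSum_insert [DecidableEq ι] (j : ι) (s : Finset ι) :
    imageSum α U (insert j s) = (U j).map (α j) ⊔ imageSum α U s :=
  Finset.iSup_insert j s _

theorem imageSum_eq_map_sup_erase [DecidableEq ι] {s : Finset ι} {j : ι} (hj : j ∈ s) :
    imageSum α U s = (U j).map (α j) ⊔ imageSum α U (s.erase j) := by
  rw [← imageSum_insert, Finset.insert_erase hj]

theorem imageSum_congr {U' : ∀ i, Submodule K (E i)} {s : Finset ι}
    (h : ∀ l ∈ s, U l = U' l) : imageSum α U s = imageSum α U' s :=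
  iSup_congr fun l => iSup_congr fun hl => by rw [h l hl]

theorem imageSum_update_of_notMem [DecidableEq ι] {s : Finset ι} {j : ι} (hj : j ∉ s)
    (V : Submodule K (E j)) : imageSum α (Function.update U j V) s = imageSum α U s :=
  imageSum_congr α _ fun _ hl => Function.update_of_ne (ne_of_mem_of_not_mem hl hj) _ _

theorem forall_finrank_update [DecidableEq ι] {d : ι → ℕ} {U : ∀ i, Submodule K (E i)}
    (hU : ∀ i, finrank K (U i) = d i) {j : ι} {V : Submodule K (E j)} (hV : finrank K V = d j) :
    ∀ i, finrank K (Function.update U j V i) = d i := by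
  intro i
  rcases eq_or_ne i j with rfl | hij
  · rw [Function.update_self]
    exact hV
  · rw [Function.update_of_ne hij]
    exact hU i

theorem exists_forall_finrank_eq {d : ι → ℕ} (hd : ∀ i, d i ≤ finrank K (E i)) :
    ∃ U : ∀ i, Submodule K (E i), ∀ i, finrank K (U i) = d i :=
  ⟨fun i => (Submodule.exists_finrank_eq (hd i)).choose,
    fun i => (Submodule.exists_finrank_eq (hd i)).choose_spec⟩

end ImageSum

section Configuration

open Function LinearMap Submodule

variable {q : ℕ} {E : Fin q → Type} {F : Type} [∀ i, AddCommGroup (E i)] [∀ i, Module ℂ (E i)]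
  [AddCommGroup F] [Module ℂ F] {α : ∀ i, E i →ₗ[ℂ] F} {d : Fin q → ℕ}

theorem range_le_sumFullImages {i : Fin q} (hi : d i = finrank ℂ (E i)) :
    range (α i) ≤ sumFullImages α d :=
  le_iSup₂_of_le i hi le_rfl

theorem lt_finrank_of_not_range_le_sumFullImages {i : Fin q} (hi : d i ≤ finrank ℂ (E i))
    (hS : ¬ range (α i) ≤ sumFullImages α d) : d i < finrank ℂ (E i) :=
  hi.lt_of_ne fun h => hS (range_le_sumFullImages h)

variable (α d) in
noncomputable def caseIIIImages (U : ∀ i, Submodule ℂ (E i)) :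
    Option {i // CaseIII α d i} → Submodule ℂ F :=
  fun o => o.elim (sumFullImages α d) fun i => (U i.1).map (α i.1)

variable (α d) in
theorem caseIIIImages_top :
    caseIIIImages α d (fun _ => ⊤) =
      fun o => o.elim (sumFullImages α d) fun i => range (α i.1) := by
  funext o
  cases o <;> simp [caseIIIImages]

theorem caseIIIImages_le_top (U : ∀ i, Submodule ℂ (E i)) :
    caseIIIImages α d U ≤ caseIIIImages α d fun _ => ⊤ := by
  rintro (_ | i)
  · exact le_rfl
  · exact map_mono le_top

variable [∀ i, FiniteDimensional ℂ (E i)]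

theorem sumFullImages_le_imageSum {U : ∀ i, Submodule ℂ (E i)}
    (hU : ∀ i, finrank ℂ (U i) = d i) {s : Finset (Fin q)}
    (hs : ∀ l, d l = finrank ℂ (E l) → l ∈ s) : sumFullImages α d ≤ imageSum α U s :=
  iSup₂_le fun l hl => by
    rw [range_eq_map, ← eq_top_of_finrank_eq ((hU l).trans hl)]
    exact map_le_imageSum α U (hs l hl)

theorem mem_sumFullImages_of_forall_mem_sup_imageSum (hd : ∀ i, d i ≤ finrank ℂ (E i))
    {x : F} (s : Finset (Fin q))
    (h : ∀ U : ∀ i, Submodule ℂ (E i), (∀ i, finrank ℂ (U i) = d i) →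
      x ∈ sumFullImages α d ⊔ imageSum α U s) : x ∈ sumFullImages α d := by
  induction s using Finset.induction_on with
  | empty =>
    obtain ⟨U, hU⟩ := exists_forall_finrank_eq hd
    simpa [imageSum] using h U hU
  | insert j s hj ih =>
    refine ih fun U hU => ?_
    rcases (hd j).eq_or_lt with hfull | hpartial
    · have hjS : (U j).map (α j) ≤ sumFullImages α d :=
        map_le_range.trans (range_le_sumFullImages hfull)
      have := h U hU
      rw [imageSum_insert, ← sup_assoc, sup_eq_left.mpr hjS] at this
      exact this
    · refine mem_of_forall_finrank_eq_mem_sup_map (α j) _ hpartial fun V hV => ?_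
      have := h (update U j V) (forall_finrank_update hU hV)
      rwa [imageSum_insert, update_self, imageSum_update_of_notMem α U hj, sup_left_comm,
        sup_comm] at this

theorem iSup_map_eq_iSup_caseIIIImages
    (hcase : ∀ i, d i = 0 ∨ (0 < d i ∧ range (α i) ≤ sumFullImages α d) ∨ CaseIII α d i)
    {U : ∀ i, Submodule ℂ (E i)} (hU : ∀ i, finrank ℂ (U i) = d i) :
    ⨆ i, (U i).map (α i) = ⨆ o, caseIIIImages α d U o := by
  refine le_antisymm (iSup_le fun i => ?_) (iSup_le fun o => ?_)
  · rcases hcase i with h₀ | ⟨-, hS⟩ | hi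
    · rw [finrank_eq_zero.mp ((hU i).trans h₀), Submodule.map_bot]
      exact bot_le
    · exact (map_le_range.trans hS).trans (le_iSup (caseIIIImages α d U) none)
    · exact le_iSup (caseIIIImages α d U) (some ⟨i, hi⟩)
  · rcases o with _ | i
    · exact (sumFullImages_le_imageSum hU fun l _ => Finset.mem_univ l).trans
        (imageSum_univ α U).le
    · exact le_iSup (fun i => (U i).map (α i)) i.1

variable [FiniteDimensional ℂ F]

open Classical in
theorem finrank_iSup_map_eq
    (hcase : ∀ i, d i = 0 ∨ (0 < d i ∧ range (α i) ≤ sumFullImages α d) ∨ CaseIII α d i)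
    (hind : iSupIndep (caseIIIImages α d fun _ => ⊤))
    {U : ∀ i, Submodule ℂ (E i)} (hU : ∀ i, finrank ℂ (U i) = d i) :
    finrank ℂ ↥(⨆ i, (U i).map (α i)) =
      finrank ℂ (sumFullImages α d) + ∑ i : {i // CaseIII α d i}, d i := by
  rw [iSup_map_eq_iSup_caseIIIImages hcase hU,
    finrank_iSup_eq_sum (hind.mono (caseIIIImages_le_top U)), Fintype.sum_option]
  congr 1
  refine Finset.sum_congr rfl fun i _ => ?_
  exact ((U i.1).equivMapOfInjective _ i.2.2.2.1).finrank_eq.symm.trans (hU i.1)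

variable {D : ℕ}

theorem range_le_or_injective_and_disjoint_imageSum
    (hD : ∀ U : ∀ i, Submodule ℂ (E i), (∀ i, finrank ℂ (U i) = d i) →
      finrank ℂ ↥(⨆ i, (U i).map (α i)) = D)
    {U : ∀ i, Submodule ℂ (E i)} (hU : ∀ i, finrank ℂ (U i) = d i) {i : Fin q}
    (hi₀ : 0 < d i) (hi : d i < finrank ℂ (E i)) :
    range (α i) ≤ imageSum α U (Finset.univ.erase i) ∨
      (Injective (α i) ∧ Disjoint (range (α i)) (imageSum α U (Finset.univ.erase i))) := by
  refine (α i).range_le_or_injective_and_disjoint _ hi₀ hi (D := D) fun V hV => ?_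
  rw [← hD (update U i V) (forall_finrank_update hU hV), ← imageSum_univ,
    imageSum_eq_map_sup_erase _ _ (Finset.mem_univ i), update_self,
    imageSum_update_of_notMem _ _ (Finset.notMem_erase i _), sup_comm]

theorem not_range_le_imageSum_update_of_lt
    (hD : ∀ U : ∀ i, Submodule ℂ (E i), (∀ i, finrank ℂ (U i) = d i) →
      finrank ℂ ↥(⨆ i, (U i).map (α i)) = D)
    {U : ∀ i, Submodule ℂ (E i)} (hU : ∀ i, finrank ℂ (U i) = d i) {i j : Fin q} (hji : j ≠ i)
    (hi₀ : 0 < d i) (hi : d i < finrank ℂ (E i)) (hj₀ : 0 < d j) (hj : d j < finrank ℂ (E j))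
    (hgood : ¬ range (α i) ≤ imageSum α U (Finset.univ.erase i)) (b : Submodule ℂ (E j)) :
    ¬ range (α i) ≤ imageSum α (update U j b) (Finset.univ.erase i) := by
  set A := imageSum α U ((Finset.univ.erase i).erase j)
  have hj_mem : j ∈ Finset.univ.erase i := Finset.mem_erase.mpr ⟨hji, Finset.mem_univ j⟩
  have hTU : imageSum α U (Finset.univ.erase i) = (U j).map (α j) ⊔ A :=
    imageSum_eq_map_sup_erase α U hj_mem
  have hTb : imageSum α (update U j b) (Finset.univ.erase i) = b.map (α j) ⊔ A := by
    rw [imageSum_eq_map_sup_erase _ _ hj_mem, update_self,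
      imageSum_update_of_notMem _ _ (Finset.notMem_erase j _)]
  obtain ⟨hinj, hdisj⟩ :=
    (range_le_or_injective_and_disjoint_imageSum hD hU hi₀ hi).resolve_left hgood
  have hRA : Disjoint (range (α i)) A := hdisj.mono_right (hTU ▸ le_sup_right)
  intro hbad
  have hR : range (α i) ≤ range (α j) ⊔ A := hbad.trans (hTb ▸ sup_le_sup_right map_le_range A)
  obtain ⟨X, hX⟩ := exists_finrank_eq (K := ℂ) hi.le
  have hXd : finrank ℂ (X.map (α i)) = d i := by
    rw [← hX]
    exact (X.equivMapOfInjective _ hinj).finrank_eq.symm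
  have hT' : imageSum α (update U i X) (Finset.univ.erase j) = X.map (α i) ⊔ A := by
    rw [imageSum_eq_map_sup_erase _ _ (Finset.mem_erase.mpr ⟨hji.symm, Finset.mem_univ i⟩),
      update_self, imageSum_update_of_notMem _ _ (Finset.notMem_erase i _), Finset.erase_right_comm]
  have hXR : X.map (α i) ≤ range (α i) := map_le_range
  have hjX : range (α j) ≤ X.map (α i) ⊔ A := by
    rcases range_le_or_injective_and_disjoint_imageSum hD (forall_finrank_update hU hX) hj₀ hj
      with h | ⟨-, h⟩
    · rwa [hT'] at h
    · rw [hT'] at h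
      have hXA := le_of_le_sup_of_disjoint_sup (hXR.trans hR) h
      rw [(hRA.mono_left hXR).eq_bot_of_le hXA, finrank_bot] at hXd
      omega
  have hXeq : X.map (α i) = range (α i) :=
    eq_of_le_of_inf_le_of_le_sup hXR (hRA.eq_bot ▸ bot_le) (hR.trans (sup_le hjX le_sup_right))
  have := finrank_range_of_inj hinj
  rw [← hXeq, hXd] at this
  omega

theorem not_range_le_imageSum_update (hd : ∀ i, d i ≤ finrank ℂ (E i))
    (hD : ∀ U : ∀ i, Submodule ℂ (E i), (∀ i, finrank ℂ (U i) = d i) →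
      finrank ℂ ↥(⨆ i, (U i).map (α i)) = D)
    {U : ∀ i, Submodule ℂ (E i)} (hU : ∀ i, finrank ℂ (U i) = d i) {i j : Fin q}
    (hi₀ : 0 < d i) (hi : d i < finrank ℂ (E i)) {b : Submodule ℂ (E j)} (hb : finrank ℂ b = d j)
    (hgood : ¬ range (α i) ≤ imageSum α U (Finset.univ.erase i)) :
    ¬ range (α i) ≤ imageSum α (update U j b) (Finset.univ.erase i) := by
  rcases eq_or_ne j i with rfl | hji
  · rwa [imageSum_update_of_notMem _ _ (Finset.notMem_erase j _)]
  rcases Nat.eq_zero_or_pos (d j) with hj₀ | hj₀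
  · rwa [finrank_eq_zero.mp (hb.trans hj₀), ← finrank_eq_zero.mp ((hU j).trans hj₀),
      update_eq_self]
  rcases (hd j).eq_or_lt with hj | hj
  · rwa [eq_top_of_finrank_eq (hb.trans hj), ← eq_top_of_finrank_eq ((hU j).trans hj),
      update_eq_self]
  exact not_range_le_imageSum_update_of_lt hD hU hji hi₀ hi hj₀ hj hgood b

theorem not_range_le_imageSum (hd : ∀ i, d i ≤ finrank ℂ (E i))
    (hD : ∀ U : ∀ i, Submodule ℂ (E i), (∀ i, finrank ℂ (U i) = d i) →
      finrank ℂ ↥(⨆ i, (U i).map (α i)) = D)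
    {i : Fin q} (hi₀ : 0 < d i) (hS : ¬ range (α i) ≤ sumFullImages α d)
    {U : ∀ i, Submodule ℂ (E i)} (hU : ∀ i, finrank ℂ (U i) = d i) :
    ¬ range (α i) ≤ imageSum α U (Finset.univ.erase i) := by
  obtain ⟨U₀, hU₀, hgood⟩ : ∃ U₀ : ∀ i, Submodule ℂ (E i), (∀ i, finrank ℂ (U₀ i) = d i) ∧
      ¬ range (α i) ≤ imageSum α U₀ (Finset.univ.erase i) := by
    by_contra! h
    exact hS fun x hx => mem_sumFullImages_of_forall_mem_sup_imageSum hd _ fun U hU =>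
      le_sup_right (a := sumFullImages α d) (h U hU hx)
  exact induction_on_update (s := fun l => {V : Submodule ℂ (E l) | finrank ℂ V = d l})
    (P := fun U : ∀ i, Submodule ℂ (E i) => ¬ range (α i) ≤ imageSum α U (Finset.univ.erase i))
    (fun U hU _ _ hb => not_range_le_imageSum_update hd hD hU hi₀
      (lt_finrank_of_not_range_le_sumFullImages (hd i) hS) hb) hU₀ hU hgood

theorem injective_and_disjoint_range_imageSum (hd : ∀ i, d i ≤ finrank ℂ (E i))
    (hD : ∀ U : ∀ i, Submodule ℂ (E i), (∀ i, finrank ℂ (U i) = d i) →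
      finrank ℂ ↥(⨆ i, (U i).map (α i)) = D)
    {i : Fin q} (hi₀ : 0 < d i) (hS : ¬ range (α i) ≤ sumFullImages α d)
    {U : ∀ i, Submodule ℂ (E i)} (hU : ∀ i, finrank ℂ (U i) = d i) :
    Injective (α i) ∧ Disjoint (range (α i)) (imageSum α U (Finset.univ.erase i)) :=
  (range_le_or_injective_and_disjoint_imageSum hD hU hi₀
    (lt_finrank_of_not_range_le_sumFullImages (hd i) hS)).resolve_left
    (not_range_le_imageSum hd hD hi₀ hS hU)

theorem forall_cases_of_finrank_eq (hd : ∀ i, d i ≤ finrank ℂ (E i))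
    (hD : ∀ U : ∀ i, Submodule ℂ (E i), (∀ i, finrank ℂ (U i) = d i) →
      finrank ℂ ↥(⨆ i, (U i).map (α i)) = D) (i : Fin q) :
    d i = 0 ∨ (0 < d i ∧ range (α i) ≤ sumFullImages α d) ∨ CaseIII α d i := by
  rcases Nat.eq_zero_or_pos (d i) with h₀ | hi₀
  · exact Or.inl h₀
  by_cases hS : range (α i) ≤ sumFullImages α d
  · exact Or.inr (Or.inl ⟨hi₀, hS⟩)
  obtain ⟨U, hU⟩ := exists_forall_finrank_eq hd
  exact Or.inr (Or.inr ⟨hi₀, lt_finrank_of_not_range_le_sumFullImages (hd i) hS,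
    (injective_and_disjoint_range_imageSum hd hD hi₀ hS hU).1, hS⟩)

theorem iSupIndep_caseIIIImages (hd : ∀ i, d i ≤ finrank ℂ (E i))
    (hD : ∀ U : ∀ i, Submodule ℂ (E i), (∀ i, finrank ℂ (U i) = d i) →
      finrank ℂ ↥(⨆ i, (U i).map (α i)) = D)
    {U : ∀ i, Submodule ℂ (E i)} (hU : ∀ i, finrank ℂ (U i) = d i) :
    iSupIndep (caseIIIImages α d U) := by
  refine iSupIndep_of_forall_ne_disjoint none fun o hnone => ?_
  obtain ⟨⟨i, hi⟩, rfl⟩ := Option.ne_none_iff_exists'.mp hnone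
  have hT : ⨆ o ≠ some ⟨i, hi⟩, caseIIIImages α d U o ≤ imageSum α U (Finset.univ.erase i) := by
    refine iSup₂_le fun o => ?_
    rcases o with _ | ⟨j, -⟩
    · exact fun _ => sumFullImages_le_imageSum hU fun l hl =>
        Finset.mem_erase.mpr ⟨fun h => hi.2.1.ne (h ▸ hl), Finset.mem_univ l⟩
    · exact fun hne => map_le_imageSum α U
        (Finset.mem_erase.mpr ⟨fun h => hne (by subst h; rfl), Finset.mem_univ j⟩)
  exact (injective_and_disjoint_range_imageSum hd hD hi.1 hi.2.2.2 hU).2.mono map_le_range hT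

theorem iSupIndep_caseIIIImages_top (hd : ∀ i, d i ≤ finrank ℂ (E i))
    (hD : ∀ U : ∀ i, Submodule ℂ (E i), (∀ i, finrank ℂ (U i) = d i) →
      finrank ℂ ↥(⨆ i, (U i).map (α i)) = D) :
    iSupIndep (caseIIIImages α d fun _ => ⊤) := by
  rw [iSupIndep_iff_finsetSum_eq_zero_imp_eq_zero]
  intro s v hv hsum
  have hcapture : ∀ l, ∃ V : Submodule ℂ (E l), finrank ℂ V = d l ∧
      ∀ h : CaseIII α d l, some ⟨l, h⟩ ∈ s → v (some ⟨l, h⟩) ∈ V.map (α l) := by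
    intro l
    by_cases h : ∃ h : CaseIII α d l, some ⟨l, h⟩ ∈ s
    · obtain ⟨h, hs⟩ := h
      obtain ⟨V, hV, hvV⟩ := exists_finrank_eq_mem_map
        (by simpa [caseIIIImages] using hv _ hs) h.1 (hd l)
      exact ⟨V, hV, fun _ _ => hvV⟩
    · obtain ⟨V, hV⟩ := exists_finrank_eq (K := ℂ) (hd l)
      exact ⟨V, hV, fun h' hs => (h ⟨h', hs⟩).elim⟩
  choose U hU hvU using hcapture
  refine (iSupIndep_iff_finsetSum_eq_zero_imp_eq_zero _).mp (iSupIndep_caseIIIImages hd hD hU)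
    s v (fun o ho => ?_) hsum
  rcases o with _ | ⟨l, h⟩
  · exact hv none ho
  · exact hvU l h ho

end Configuration

/-- `dim (Σᵢ αᵢ(Uᵢ))` is independent of the choice of `dᵢ`-dimensional subspaces
`Uᵢ ⊆ Eᵢ` if and only if each `i` is in one of the cases (i) `dᵢ = 0`,
(ii) `dᵢ > 0` and `Im αᵢ ⊆ S`, (iii) `0 < dᵢ < dim Eᵢ`, `αᵢ` injective and
`Im αᵢ ⊄ S`, and moreover `S` together with the images `Im αᵢ` for `i` in case
(iii) are in direct sum. -/
theorem stmt_4 (q : ℕ) (E : Fin q → Type) (F : Type)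
    [∀ i, AddCommGroup (E i)] [∀ i, Module ℂ (E i)] [∀ i, FiniteDimensional ℂ (E i)]
    [AddCommGroup F] [Module ℂ F] [FiniteDimensional ℂ F]
    (α : ∀ i, E i →ₗ[ℂ] F) (d : Fin q → ℕ) (hd : ∀ i, d i ≤ finrank ℂ (E i)) :
    (∃ D : ℕ, ∀ U : ∀ i, Submodule ℂ (E i), (∀ i, finrank ℂ (U i) = d i) →
        finrank ℂ ↥(⨆ i, (U i).map (α i)) = D) ↔
      ((∀ i, d i = 0 ∨
          (0 < d i ∧ LinearMap.range (α i) ≤ sumFullImages α d) ∨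
          CaseIII α d i) ∧
        iSupIndep
          (fun o : Option {i : Fin q // CaseIII α d i} =>
            o.elim (sumFullImages α d) (fun i => LinearMap.range (α i.1)))) := by
  rw [← caseIIIImages_top]
  constructor
  · rintro ⟨D, hD⟩
    exact ⟨forall_cases_of_finrank_eq hd hD, iSupIndep_caseIIIImages_top hd hD⟩
  · rintro ⟨hcase, hind⟩
    classical
    exact ⟨_, fun U hU => finrank_iSup_map_eq hcase hind hU⟩
end

section
/- Let x₁, …, x_q and y₁, …, y_q be indeterminates. For 0 ≤ k ≤ q, let c_k be the coefficient of u^k v^{q−k} in the product ∏_{i=1}^q (xᵢ u + yᵢ v), viewed as a polynomial in u, v with coefficients in ℂ[x₁,y₁,…,x_q,y_q]. Then the subalgebra of ℂ[x₁,y₁,…,x_q,y_q] consisting of polynomials invariant under the symmetric group 𝔖_q acting by simultaneously permuting the pairs (xᵢ, yᵢ), and multihomogeneous of the same degree p in each pair (xᵢ,yᵢ), is, as p ranges over ℕ, the polynomial algebra freely generated by c₀, c₁, …, c_q. -/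
open MvPolynomial

/-- `c_k`: the coefficient of `u^k v^{q-k}` in `∏ᵢ (xᵢ u + yᵢ v)`, as a
polynomial in the variables `xᵢ = X (i, 0)`, `yᵢ = X (i, 1)`:
`c_k = Σ_{S ⊆ {1,…,q}, |S| = k} ∏_{i ∈ S} xᵢ ∏_{i ∉ S} yᵢ`. -/
noncomputable def bihomC (q : ℕ) (k : Fin (q + 1)) : MvPolynomial (Fin q × Fin 2) ℂ :=
  ∑ S ∈ Finset.univ.powersetCard (k : ℕ),
    (∏ i ∈ S, X (i, (0 : Fin 2))) * ∏ i ∈ Sᶜ, X (i, (1 : Fin 2))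

/-- Invariance under the symmetric group `𝔖_q` permuting the pairs `(xᵢ, yᵢ)`. -/
def SymInvariant (q : ℕ) (P : MvPolynomial (Fin q × Fin 2) ℂ) : Prop :=
  ∀ σ : Equiv.Perm (Fin q), rename (Prod.map σ id) P = P

/-- `P` is multihomogeneous of degree `p`: homogeneous of degree `p` in each
pair of variables `(xᵢ, yᵢ)` separately. -/
def MultiHomog (q p : ℕ) (P : MvPolynomial (Fin q × Fin 2) ℂ) : Prop :=
  ∀ m ∈ P.support, ∀ i : Fin q, m (i, 0) + m (i, 1) = p

/-!
Setting every `yᵢ = 1` sends `c_k` to the elementary symmetric polynomial `e_k`, and it is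
injective on polynomials multihomogeneous of a fixed degree `d`, because there the exponent of
`yᵢ` is `d` minus that of `xᵢ`. An invariant `P` of degree `d` therefore dehomogenizes to a
symmetric polynomial of degree at most `d` in each variable. Running the fundamental theorem on
lexicographic leading terms writes it as a combination of monomials `∏ e_{i+1}^{tᵢ}` with
`∑ tᵢ ≤ d`, and each of these is the dehomogenization of `∏ c_{i+1}^{tᵢ} · c₀^{d - ∑ tᵢ}`, which is
multihomogeneous of degree `d`.

For independence, all `c_k` are homogeneous of the same total degree `q ≥ 1`, so a relation may
be assumed homogeneous. Setting `yᵢ = 1` turns it into `F(1, e₁, …, e_q) = 0`, which forces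
`F(1, t₁, …, t_q) = 0` because the `e_k` are independent, and a homogeneous `F` is determined
by `F(1, t₁, …, t_q)`.
-/

open Finset

namespace MvPolynomial

section MonomialMap

variable {R σ τ : Type*} [CommSemiring R]

def MapsMonomials (φ : MvPolynomial σ R →ₗ[R] MvPolynomial τ R) (π : (σ →₀ ℕ) → τ →₀ ℕ) : Prop :=
  ∀ m a, φ (monomial m a) = monomial (π m) a

namespace MapsMonomials

variable {φ : MvPolynomial σ R →ₗ[R] MvPolynomial τ R} {π : (σ →₀ ℕ) → τ →₀ ℕ}

lemma apply_eq_sum (hφ : MapsMonomials φ π) (P : MvPolynomial σ R) :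
    φ P = ∑ m ∈ P.support, monomial (π m) (coeff m P) := by
  conv_lhs => rw [P.as_sum, map_sum]
  exact sum_congr rfl fun m _ => hφ m _

lemma exists_of_mem_support (hφ : MapsMonomials φ π) {P : MvPolynomial σ R} {s : τ →₀ ℕ}
    (hs : s ∈ (φ P).support) : ∃ m ∈ P.support, π m = s := by
  classical
  rw [hφ.apply_eq_sum] at hs
  obtain ⟨m, hm, hsm⟩ := mem_biUnion.mp (support_sum hs)
  exact ⟨m, hm, (mem_singleton.mp (support_monomial_subset hsm)).symm⟩

lemma coeff_apply (hφ : MapsMonomials φ π) {P : MvPolynomial σ R} {m : σ →₀ ℕ}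
    (hπ : Set.InjOn π (insert m P.support)) : coeff (π m) (φ P) = coeff m P := by
  classical
  rw [hφ.apply_eq_sum, coeff_sum]
  simp only [coeff_monomial]
  rw [sum_eq_single m, if_pos rfl]
  · intro m' hm' hne
    exact if_neg fun h => hne (hπ (Set.mem_insert_of_mem _ hm') (Set.mem_insert _ _) h)
  · intro hm
    rw [if_pos rfl, notMem_support_iff.mp hm]

lemma eq_zero_of_injOn (hφ : MapsMonomials φ π) {P : MvPolynomial σ R}
    (hπ : Set.InjOn π P.support) (hP : φ P = 0) : P = 0 := by
  ext m
  by_contra hm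
  have hmP : m ∈ P.support := mem_support_iff.mpr hm
  rw [← hφ.coeff_apply (by rwa [Set.insert_eq_of_mem hmP]), hP, coeff_zero] at hm
  exact hm rfl

end MapsMonomials

end MonomialMap

end MvPolynomial

lemma Finsupp.Lex.apply_zero_le_of_le {n : ℕ} [NeZero n] {N : Type*} [Zero N] [LinearOrder N]
    {a b : Lex (Fin n →₀ N)} (h : a ≤ b) : ofLex a 0 ≤ ofLex b 0 := by
  obtain rfl | hlt := h.eq_or_lt
  · exact le_rfl
  obtain ⟨j, hj, hlt⟩ := Finsupp.lex_def.mp hlt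
  obtain rfl | hj0 := (Fin.zero_le j).eq_or_lt
  · exact hlt.le
  · exact (hj 0 hj0).le

lemma Fin.accumulate_apply_zero {n m : ℕ} [NeZero m] (t : Fin n → ℕ) :
    accumulate n m t 0 = ∑ i, t i := by
  rw [accumulate_apply]
  exact sum_congr (filter_true_of_mem fun i _ => Nat.zero_le _) fun _ _ => rfl

lemma Finsupp.tail_injOn_degree_eq {n : ℕ} (d : ℕ) :
    Set.InjOn Finsupp.tail {m : Fin (n + 1) →₀ ℕ | m.degree = d} := by
  intro m hm m' hm' h
  have htail (i : Fin n) : m i.succ = m' i.succ := DFunLike.congr_fun h i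
  have hdeg : m 0 + ∑ i : Fin n, m i.succ = m' 0 + ∑ i : Fin n, m' i.succ := by
    rw [← Fin.sum_univ_succ, ← Fin.sum_univ_succ (f := m'), ← Finsupp.degree_eq_sum,
      ← Finsupp.degree_eq_sum, Set.mem_ofPred.mp hm, Set.mem_ofPred.mp hm']
  ext i
  cases i using Fin.cases with
  | zero => simpa only [htail, add_left_inj] using hdeg
  | succ i => exact htail i

namespace MvPolynomial

lemma ofLex_supDegree_apply_le_degreeOf {R σ : Type*} [CommSemiring R] [LinearOrder σ]
    (p : MvPolynomial σ R) (i : σ) : ofLex (p.supDegree toLex) i ≤ p.degreeOf i := by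
  obtain rfl | hp := eq_or_ne p 0
  · rw [AddMonoidAlgebra.supDegree_zero, bot_eq_zero (α := Lex (σ →₀ ℕ))]
    exact Nat.zero_le _
  obtain ⟨m, hm, he⟩ := AddMonoidAlgebra.exists_supDegree_mem_support toLex hp
  rw [he]
  exact monomial_le_degreeOf i hm

lemma esymmAlgHomMonomial_eq_smul {R σ : Type*} [CommSemiring R] [Fintype σ] {n : ℕ}
    (t : Fin n →₀ ℕ) (r : R) :
    esymmAlgHomMonomial σ t r = r • esymmAlgHomMonomial σ t 1 := by
  rw [esymmAlgHomMonomial, esymmAlgHomMonomial, ← Subalgebra.coe_smul, ← map_smul, smul_monomial,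
    smul_eq_mul, mul_one]

lemma homogeneousComponent_aeval_of_isHomogeneous {R σ τ : Type*} [CommSemiring R]
    {g : σ → MvPolynomial τ R} {d : ℕ} (hd : d ≠ 0) (hg : ∀ i, (g i).IsHomogeneous d)
    (F : MvPolynomial σ R) (n : ℕ) :
    homogeneousComponent (d * n) (aeval g F) = aeval g (homogeneousComponent n F) := by
  have hcomp (m : ℕ) : aeval g (homogeneousComponent m F) ∈ homogeneousSubmodule τ R (d * m) :=
    (homogeneousComponent_isHomogeneous m F).aeval g hg
  conv_lhs => rw [← sum_homogeneousComponent F, map_sum, map_sum]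
  rw [sum_eq_single n]
  · rw [homogeneousComponent_of_mem (hcomp n), if_pos rfl]
  · intro m _ hmn
    rw [homogeneousComponent_of_mem (hcomp m), if_neg fun h => hmn (Nat.eq_of_mul_eq_mul_left
      (Nat.pos_of_ne_zero hd) h).symm]
  · intro hn
    rw [homogeneousComponent_eq_zero n F (by simpa [Nat.lt_succ_iff] using hn), map_zero,
      map_zero]

section FundamentalTheorem

open AddMonoidAlgebra Fin

variable {R : Type*} [CommRing R] {n : ℕ}

lemma IsSymmetric.mem_span_esymmAlgHomMonomial_of_supDegree [NeZero n] {d : ℕ}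
    {p : MvPolynomial (Fin n) R} (hp : p.IsSymmetric) (hd : ofLex (p.supDegree toLex) 0 ≤ d) :
    p ∈ Submodule.span R
      ((fun t : Fin n →₀ ℕ => esymmAlgHomMonomial (Fin n) t (1 : R)) '' {t | ∑ i, t i ≤ d}) := by
  induction he : p.supDegree toLex using WellFoundedLT.induction generalizing p with | _ u ih
  subst he
  obtain rfl | h0 := eq_or_ne p 0
  · exact Submodule.zero_mem _
  set t := Finsupp.equivFunOnFinite.symm (invAccumulate n n ↑(ofLex <| p.supDegree toLex))
  set M := esymmAlgHomMonomial (Fin n) t (p.leadingCoeff toLex) with hMdef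
  have hacc : accumulate n n ↑t = ↑(ofLex (p.supDegree toLex)) :=
    accumulate_invAccumulate le_rfl hp.antitone_supDegree
  have hMdeg : M.supDegree toLex = p.supDegree toLex := by
    rw [← ofLex_inj, DFunLike.ext'_iff, supDegree_esymmAlgHomMonomial _ _ le_rfl, hacc]
    rwa [Ne, leadingCoeff_eq_zero toLex.injective]
  have hM : M ∈ Submodule.span R
      ((fun t : Fin n →₀ ℕ => esymmAlgHomMonomial (Fin n) t (1 : R)) '' {t | ∑ i, t i ≤ d}) := by
    have ht : ∑ i, t i ≤ d := by
      rw [← accumulate_apply_zero (m := n), hacc]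
      exact hd
    rw [hMdef, esymmAlgHomMonomial_eq_smul]
    exact Submodule.smul_mem _ _ (Submodule.subset_span ⟨t, ht, rfl⟩)
  obtain hpM | hpM := eq_or_ne p M
  · rwa [hpM]
  have hlt : (p - M).supDegree toLex < p.supDegree toLex :=
    (supDegree_sub_lt_of_leadingCoeff_eq toLex.injective hMdeg.symm
      (leadingCoeff_esymmAlgHomMonomial t le_rfl).symm).resolve_right hpM
  have hsub := ih _ hlt (hp.sub (isSymmetric_esymmAlgHomMonomial _ _))
    ((Finsupp.Lex.apply_zero_le_of_le hlt.le).trans hd) rfl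
  rw [← sub_add_cancel p M]
  exact Submodule.add_mem _ hsub hM

theorem IsSymmetric.mem_span_esymmAlgHomMonomial [NeZero n] {d : ℕ}
    {p : MvPolynomial (Fin n) R} (hp : p.IsSymmetric) (hd : p.degreeOf 0 ≤ d) :
    p ∈ Submodule.span R
      ((fun t : Fin n →₀ ℕ => esymmAlgHomMonomial (Fin n) t (1 : R)) '' {t | ∑ i, t i ≤ d}) :=
  hp.mem_span_esymmAlgHomMonomial_of_supDegree ((ofLex_supDegree_apply_le_degreeOf p 0).trans hd)

end FundamentalTheorem

section DehomogZero

variable {R : Type*} [CommRing R] {q : ℕ}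

variable (R q) in
noncomputable def dehomogZero : MvPolynomial (Fin (q + 1)) R →ₐ[R] MvPolynomial (Fin q) R :=
  aeval (Fin.cons 1 X)

lemma mapsMonomials_dehomogZero :
    MapsMonomials (dehomogZero R q).toLinearMap Finsupp.tail := by
  intro m a
  rw [AlgHom.toLinearMap_apply, dehomogZero, aeval_monomial, monomial_eq,
    Finsupp.prod_fintype _ _ fun _ => pow_zero _, Finsupp.prod_fintype _ _ fun _ => pow_zero _,
    Fin.prod_univ_succ, algebraMap_eq]
  simp [Finsupp.tail_apply]

lemma IsHomogeneous.eq_zero_of_dehomogZero_eq_zero {n : ℕ} {F : MvPolynomial (Fin (q + 1)) R}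
    (hF : F.IsHomogeneous n) (h : dehomogZero R q F = 0) : F = 0 :=
  mapsMonomials_dehomogZero.eq_zero_of_injOn
    ((Finsupp.tail_injOn_degree_eq n).mono fun m hm => by
      rw [Set.mem_ofPred, Finsupp.degree_eq_weight_one]
      exact hF (mem_support_iff.mp hm))
    h

end DehomogZero

section Dehomog

variable {R : Type*} [CommRing R] {q : ℕ}

def pairWeight (q : ℕ) (v : Fin q × Fin 2) : Fin q → ℕ := Pi.single v.1 1

lemma weight_pairWeight_apply (m : Fin q × Fin 2 →₀ ℕ) (i : Fin q) :
    Finsupp.weight (pairWeight q) m i = m (i, 0) + m (i, 1) := by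
  rw [Finsupp.weight_apply, Finsupp.sum_fintype _ _ fun v => zero_smul ℕ (pairWeight q v),
    Finset.sum_apply, Fintype.sum_prod_type, Finset.sum_eq_single i, Fin.sum_univ_two]
  · simp [pairWeight]
  · intro j _ hji
    simp [pairWeight, hji.symm]
  · simp

lemma multiHomog_iff_isWeightedHomogeneous {p : ℕ} {P : MvPolynomial (Fin q × Fin 2) ℂ} :
    MultiHomog q p P ↔ IsWeightedHomogeneous (pairWeight q) P fun _ => p := by
  refine forall_congr' fun m => imp_congr mem_support_iff ?_
  simp only [_root_.funext_iff, weight_pairWeight_apply]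

variable (R q) in
noncomputable def dehomog : MvPolynomial (Fin q × Fin 2) R →ₐ[R] MvPolynomial (Fin q) R :=
  aeval fun v => if v.2 = 0 then X v.1 else 1

noncomputable def dehomogExponent (m : Fin q × Fin 2 →₀ ℕ) : Fin q →₀ ℕ :=
  Finsupp.equivFunOnFinite.symm fun i => m (i, 0)

@[simp]
lemma dehomogExponent_apply (m : Fin q × Fin 2 →₀ ℕ) (i : Fin q) :
    dehomogExponent m i = m (i, 0) := rfl

lemma mapsMonomials_dehomog :
    MapsMonomials (dehomog R q).toLinearMap (dehomogExponent (q := q)) := by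
  intro m a
  rw [AlgHom.toLinearMap_apply, dehomog, aeval_monomial, monomial_eq,
    Finsupp.prod_fintype _ _ fun _ => pow_zero _, Finsupp.prod_fintype _ _ fun _ => pow_zero _,
    algebraMap_eq, Fintype.prod_prod_type]
  simp

lemma dehomogExponent_injOn (d : Fin q → ℕ) :
    Set.InjOn dehomogExponent {m : Fin q × Fin 2 →₀ ℕ | Finsupp.weight (pairWeight q) m = d} := by
  intro m hm m' hm' h
  have hsum (i : Fin q) : m (i, 0) + m (i, 1) = m' (i, 0) + m' (i, 1) := by
    rw [← weight_pairWeight_apply, ← weight_pairWeight_apply, Set.mem_ofPred.mp hm,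
      Set.mem_ofPred.mp hm']
  have h0 (i : Fin q) : m (i, 0) = m' (i, 0) := DFunLike.congr_fun h i
  ext ⟨i, j⟩
  fin_cases j
  · exact h0 i
  · have := hsum i
    have := h0 i
    simp only [Fin.mk_one, Fin.isValue]
    omega

lemma eq_of_dehomog_eq {d : Fin q → ℕ} {P Q : MvPolynomial (Fin q × Fin 2) R}
    (hP : IsWeightedHomogeneous (pairWeight q) P d) (hQ : IsWeightedHomogeneous (pairWeight q) Q d)
    (h : dehomog R q P = dehomog R q Q) : P = Q := by
  rw [← sub_eq_zero]
  refine mapsMonomials_dehomog.eq_zero_of_injOn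
    ((dehomogExponent_injOn d).mono fun m hm => (hP.sub hQ) (mem_support_iff.mp hm)) ?_
  rw [AlgHom.toLinearMap_apply, map_sub, h, sub_self]

lemma degreeOf_dehomog_le {d : ℕ} {P : MvPolynomial (Fin q × Fin 2) R}
    (hP : IsWeightedHomogeneous (pairWeight q) P fun _ => d) (i : Fin q) :
    (dehomog R q P).degreeOf i ≤ d := by
  rw [degreeOf_le_iff]
  intro s hs
  obtain ⟨m, hm, rfl⟩ := mapsMonomials_dehomog.exists_of_mem_support hs
  have := congr_fun (hP (mem_support_iff.mp hm)) i
  rw [weight_pairWeight_apply] at this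
  rw [dehomogExponent_apply]
  omega

lemma dehomog_rename (σ : Equiv.Perm (Fin q)) (P : MvPolynomial (Fin q × Fin 2) R) :
    dehomog R q (rename (Prod.map σ id) P) = rename σ (dehomog R q P) := by
  rw [dehomog, aeval_rename, comp_aeval_apply]
  congr 2
  ext ⟨i, j⟩ : 1
  split_ifs <;> simp_all

end Dehomog

end MvPolynomial

lemma isWeightedHomogeneous_bihomC (q : ℕ) (k : Fin (q + 1)) :
    IsWeightedHomogeneous (pairWeight q) (bihomC q k) fun _ => 1 := by
  refine IsWeightedHomogeneous.sum _ _ _ fun S _ => ?_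
  have h := (IsWeightedHomogeneous.prod S (fun i => X (i, 0)) (fun i => pairWeight q (i, 0))
    fun i _ => isWeightedHomogeneous_X ℂ _ _).mul
    (IsWeightedHomogeneous.prod Sᶜ (fun i => X (i, 1)) (fun i => pairWeight q (i, 1))
      fun i _ => isWeightedHomogeneous_X ℂ _ _)
  simp only [pairWeight] at h
  rwa [sum_add_sum_compl, Finset.univ_sum_single] at h

lemma isHomogeneous_bihomC (q : ℕ) (k : Fin (q + 1)) : (bihomC q k).IsHomogeneous q := by
  refine IsHomogeneous.sum _ _ _ fun S _ => ?_
  have h := (IsHomogeneous.prod S (fun i => X (i, (0 : Fin 2))) (fun _ => 1)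
    fun i _ => isHomogeneous_X ℂ _).mul
    (IsHomogeneous.prod Sᶜ (fun i => X (i, (1 : Fin 2))) (fun _ => 1)
      fun i _ => isHomogeneous_X ℂ _)
  rwa [sum_const, sum_const, smul_eq_mul, smul_eq_mul, mul_one, mul_one, card_add_card_compl,
    Fintype.card_fin] at h

lemma symInvariant_bihomC (q : ℕ) (k : Fin (q + 1)) : SymInvariant q (bihomC q k) := by
  intro σ
  have hcompl (S : Finset (Fin q)) : (S.map σ.toEmbedding)ᶜ = Sᶜ.map σ.toEmbedding := by
    ext
    simp [mem_map_equiv]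
  unfold bihomC
  conv_rhs => rw [← map_univ_equiv σ, powersetCard_map, sum_map]
  simp only [map_sum, map_mul, map_prod, rename_X]
  refine sum_congr rfl fun S _ => ?_
  simp only [RelEmbedding.coe_toEmbedding, mapEmbedding_apply]
  rw [hcompl, prod_map, prod_map]
  rfl

lemma dehomog_bihomC (q : ℕ) (k : Fin (q + 1)) : dehomog ℂ q (bihomC q k) = esymm (Fin q) ℂ k := by
  unfold bihomC esymm
  rw [map_sum]
  refine sum_congr rfl fun S _ => ?_
  simp [dehomog]

noncomputable def bihomMonomial (q d : ℕ) (t : Fin q →₀ ℕ) : MvPolynomial (Fin q × Fin 2) ℂ :=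
  (∏ i : Fin q, bihomC q i.succ ^ t i) * bihomC q 0 ^ (d - ∑ i, t i)

lemma bihomMonomial_mem_adjoin (q d : ℕ) (t : Fin q →₀ ℕ) :
    bihomMonomial q d t ∈ Algebra.adjoin ℂ (Set.range (bihomC q)) :=
  Subalgebra.mul_mem _
    (Subalgebra.prod_mem _ fun _ _ =>
      Subalgebra.pow_mem _ (Algebra.subset_adjoin (Set.mem_range_self _)) _)
    (Subalgebra.pow_mem _ (Algebra.subset_adjoin (Set.mem_range_self _)) _)

lemma isWeightedHomogeneous_bihomMonomial {q d : ℕ} {t : Fin q →₀ ℕ} (ht : ∑ i, t i ≤ d) :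
    IsWeightedHomogeneous (pairWeight q) (bihomMonomial q d t) fun _ => d := by
  have h := (IsWeightedHomogeneous.prod univ _ _
    fun i _ => (isWeightedHomogeneous_bihomC q i.succ).pow (t i)).mul
    ((isWeightedHomogeneous_bihomC q 0).pow (d - ∑ i, t i))
  rw [bihomMonomial]
  convert h using 1
  funext i
  simp only [Pi.add_apply, Finset.sum_apply, Pi.smul_apply, smul_eq_mul, mul_one]
  omega

lemma dehomog_bihomMonomial (q d : ℕ) (t : Fin q →₀ ℕ) :
    dehomog ℂ q (bihomMonomial q d t) = esymmAlgHomMonomial (Fin q) t 1 := by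
  rw [bihomMonomial, esymmAlgHomMonomial, esymmAlgHom_apply, aeval_monomial,
    Finsupp.prod_fintype _ _ fun _ => pow_zero _]
  simp [dehomog_bihomC]

theorem mem_adjoin_range_bihomC {q d : ℕ} [NeZero q] {P : MvPolynomial (Fin q × Fin 2) ℂ}
    (hP : SymInvariant q P) (hPd : IsWeightedHomogeneous (pairWeight q) P fun _ => d) :
    P ∈ Algebra.adjoin ℂ (Set.range (bihomC q)) := by
  have hsym : (dehomog ℂ q P).IsSymmetric := fun σ => by rw [← dehomog_rename, hP σ]
  have hspan := hsym.mem_span_esymmAlgHomMonomial (degreeOf_dehomog_le hPd 0)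
  have himage : (fun t : Fin q →₀ ℕ => esymmAlgHomMonomial (Fin q) t (1 : ℂ)) '' {t | ∑ i, t i ≤ d}
      = (dehomog ℂ q).toLinearMap '' (bihomMonomial q d '' {t | ∑ i, t i ≤ d}) := by
    rw [Set.image_image]
    exact Set.image_congr fun t _ => (dehomog_bihomMonomial q d t).symm
  rw [himage, ← Submodule.map_span] at hspan
  obtain ⟨Q, hQ, hQP⟩ := Submodule.mem_map.mp hspan
  have hQ' : Q ∈ weightedHomogeneousSubmodule ℂ (pairWeight q) (fun _ => d) ⊓
      Subalgebra.toSubmodule (Algebra.adjoin ℂ (Set.range (bihomC q))) := by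
    refine Submodule.span_le.mpr ?_ hQ
    rintro _ ⟨t, ht, rfl⟩
    exact ⟨isWeightedHomogeneous_bihomMonomial ht, bihomMonomial_mem_adjoin q d t⟩
  rw [← eq_of_dehomog_eq hQ'.1 hPd hQP]
  exact hQ'.2

lemma dehomog_aeval_bihomC (q : ℕ) (F : MvPolynomial (Fin (q + 1)) ℂ) :
    dehomog ℂ q (aeval (bihomC q) F) = (esymmAlgHom (Fin q) ℂ q (dehomogZero ℂ q F)).val := by
  rw [esymmAlgHom_apply, dehomogZero, comp_aeval_apply, comp_aeval_apply]
  refine congrArg (fun g => aeval g F) (_root_.funext fun k => ?_)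
  cases k using Fin.cases with
  | zero => simp [dehomog_bihomC, esymm_zero]
  | succ j => simp [dehomog_bihomC]

lemma eq_zero_of_aeval_bihomC_eq_zero {q n : ℕ} {F : MvPolynomial (Fin (q + 1)) ℂ}
    (hF : F.IsHomogeneous n) (h : aeval (bihomC q) F = 0) : F = 0 := by
  refine hF.eq_zero_of_dehomogZero_eq_zero (esymmAlgHom_fin_injective ℂ le_rfl ?_)
  rw [map_zero, ← Subtype.val_inj, ← dehomog_aeval_bihomC, h, map_zero, ZeroMemClass.coe_zero]

theorem algebraicIndependent_bihomC {q : ℕ} (hq : 1 ≤ q) : AlgebraicIndependent ℂ (bihomC q) := by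
  rw [algebraicIndependent_iff]
  intro F hF
  rw [← sum_homogeneousComponent F]
  refine sum_eq_zero fun n _ =>
    eq_zero_of_aeval_bihomC_eq_zero (homogeneousComponent_isHomogeneous n F) ?_
  rw [← homogeneousComponent_aeval_of_isHomogeneous (by omega) (isHomogeneous_bihomC q) F n, hF,
    map_zero]

/-- The algebra of `𝔖_q`-invariant multihomogeneous polynomials is the polynomial
algebra freely generated by `c₀, …, c_q`: the `c_k` are algebraically independent,
they are invariant and multihomogeneous of degree `1`, and every invariant
polynomial which is multihomogeneous of some degree `p` is a polynomial in the
`c_k`. -/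
theorem stmt_7 (q : ℕ) (hq : 1 ≤ q) :
    AlgebraicIndependent ℂ (bihomC q) ∧
    (∀ k : Fin (q + 1), SymInvariant q (bihomC q k) ∧ MultiHomog q 1 (bihomC q k)) ∧
    (∀ (p : ℕ) (P : MvPolynomial (Fin q × Fin 2) ℂ),
      SymInvariant q P → MultiHomog q p P →
        P ∈ Algebra.adjoin ℂ (Set.range (bihomC q))) := by
  have : NeZero q := ⟨by omega⟩
  refine ⟨algebraicIndependent_bihomC hq, fun k => ⟨symInvariant_bihomC q k, ?_⟩,
    fun p P hP hPp => mem_adjoin_range_bihomC hP (multiHomog_iff_isWeightedHomogeneous.mp hPp)⟩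
  exact multiHomog_iff_isWeightedHomogeneous.mpr (isWeightedHomogeneous_bihomC q k)
end
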